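/- For any matching model under distributional constraints satisfying heredity, a cutoff stable matching always exists. -/

import Mathlib

open Finset

/-- An instance of the two-sided matching problem: applicants `A` with strict preference
lists over acceptable projects, projects `P` with strict preference lists over
acceptable applicants (best first), and capacities. -/
structure MatchInst (A P : Type) where
  prefA : A → List P
  prefP : P → List A
  cap : P → ℕ

variable {A P : Type} [Fintype A] [Fintype P] [DecidableEq A] [DecidableEq P]

/-- number of applicants matched to project `p` -/
def mcount (M : A → Option P) (p : P) : ℕ := (univ.filter fun a => M a = some p).card

/-- counts after adding one extra applicant to project `p` (the matching `M ∪ {(a,p)}`) -/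
def addCount (M : A → Option P) (p : P) : P → ℕ :=
  fun q => mcount M q + if q = p then 1 else 0

/-- the matching `(M ∪ {(a,p)}) \ {(a, M(a))}` -/
def swap (M : A → Option P) (a : A) (p : P) : A → Option P := Function.update M a (some p)

/-- a feasibility function on (anonymous) distributions of applicants over projects,
satisfying the heredity property -/
def Heredity (f : (P → ℕ) → Prop) : Prop :=
  f (fun _ => 0) ∧ ∀ v w : P → ℕ, (∀ p, w p ≤ v p) → f v → f w

namespace MatchInst

variable (I : MatchInst A P)

def accA (a : A) (p : P) : Prop := p ∈ I.prefA a
def accP (p : P) (a : A) : Prop := a ∈ I.prefP p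
/-- rank of project `p` in applicant `a`'s list (0-indexed; lower is better) -/
def rkA (a : A) (p : P) : ℕ := (I.prefA a).idxOf p
/-- rank of applicant `a` in project `p`'s list (0-indexed; lower is better) -/
def rkP (p : P) (a : A) : ℕ := (I.prefP p).idxOf a
/-- score of applicant `a` at project `p`: `|A| - k + 1` if `a` is ranked `k`-th, `0` if unranked -/
def score (p : P) (a : A) : ℕ :=
  if a ∈ I.prefP p then Fintype.card A - (I.prefP p).idxOf a else 0

def IsMatching (M : A → Option P) : Prop :=
  (∀ a p, M a = some p → I.accA a p ∧ I.accP p a) ∧ ∀ p, mcount M p ≤ I.cap p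

/-- `a` strictly prefers project `p` to the assignment `o` (being unmatched is worst) -/
def Prefers (a : A) (p : P) (o : Option P) : Prop :=
  I.accA a p ∧ ∀ q, o = some q → I.rkA a p < I.rkA a q

/-- no justified envy -/
def Fair (M : A → Option P) : Prop :=
  ∀ a p, M a ≠ some p → I.Prefers a p (M a) →
    ∀ a', M a' = some p → I.rkP p a' < I.rkP p a

/-- applicant `a` is admissible at project `p` under cutoffs `d` -/
def Adm (d : P → ℕ) (a : A) (p : P) : Prop :=
  I.accA a p ∧ I.accP p a ∧ d p ≤ I.score p a

/-- cutoffs `d` induce the matching `M`: every applicant is matched to her most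
preferred project where she is admissible (and unmatched if there is none) -/
def Induces (d : P → ℕ) (M : A → Option P) : Prop :=
  ∀ a : A,
    (∀ p, M a = some p → I.Adm d a p ∧ ∀ q, I.Adm d a q → q ≠ p → I.rkA a p < I.rkA a q) ∧
    (M a = none → ∀ p, ¬ I.Adm d a p)

def Blocking (M : A → Option P) (a : A) (p : P) : Prop :=
  I.Prefers a p (M a) ∧
    ((mcount M p < I.cap p ∧ I.accP p a) ∨ ∃ a', M a' = some p ∧ I.rkP p a < I.rkP p a')

def StronglyStable (f : (P → ℕ) → Prop) (M : A → Option P) : Prop :=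
  I.IsMatching M ∧ f (mcount M) ∧
    ∀ a p, I.Blocking M a p →
      (∀ a', M a' = some p → I.rkP p a' < I.rkP p a) ∧ ¬ f (mcount (swap M a p))

/-- weak stability in terms of permitted blocking pairs -/
def WeaklyStableBlk (f : (P → ℕ) → Prop) (M : A → Option P) : Prop :=
  I.IsMatching M ∧ f (mcount M) ∧
    ∀ a p, I.Blocking M a p →
      (∀ a', M a' = some p → I.rkP p a' < I.rkP p a) ∧ ¬ f (addCount M p)

def WeaklyNonWasteful (f : (P → ℕ) → Prop) (M : A → Option P) : Prop :=
  f (mcount M) ∧ ∀ a p, M a ≠ some p → I.accP p a → I.Prefers a p (M a) →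
    ¬ f (addCount M p) ∨ I.cap p ≤ mcount M p

/-- weak stability as fairness plus weak non-wastefulness -/
def WeaklyStable (f : (P → ℕ) → Prop) (M : A → Option P) : Prop :=
  I.IsMatching M ∧ I.Fair M ∧ I.WeaklyNonWasteful f M

def CutoffNonWasteful (f : (P → ℕ) → Prop) (M : A → Option P) : Prop :=
  f (mcount M) ∧ ∀ a p, M a ≠ some p → I.accP p a → I.Prefers a p (M a) →
    ¬ f (mcount (swap M a p)) ∨
    (∃ a', M a' ≠ some p ∧ I.accP p a' ∧ I.rkP p a' < I.rkP p a ∧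
      I.Prefers a' p (M a') ∧ ¬ f (mcount (swap M a' p))) ∨
    I.cap p ≤ mcount M p

def CutoffStable (f : (P → ℕ) → Prop) (M : A → Option P) : Prop :=
  I.IsMatching M ∧ I.Fair M ∧ I.CutoffNonWasteful f M

/-- project `p` is unconstrained for `M`: one more applicant can be added to `p` feasibly -/
def Unconstrained (f : (P → ℕ) → Prop) (M : A → Option P) (p : P) : Prop :=
  f (addCount M p)

/-- cutoffs after decreasing the cutoff of `p` by one -/
def decCut (d : P → ℕ) (p : P) : P → ℕ := Function.update d p (d p - 1)

/-- minimal cutoffs: no cutoff can be decreased keeping the induced matching feasible -/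
def MinimalCutoffs (f : (P → ℕ) → Prop) (d : P → ℕ) : Prop :=
  ∀ p, d p = 0 ∨ ∀ M', I.Induces (decCut d p) M' → ¬ f (mcount M')

def StrictlyBetter (a : A) (o o' : Option P) : Prop :=
  ∃ p, o = some p ∧ I.accA a p ∧ ∀ q, o' = some q → I.rkA a p < I.rkA a q

def ParetoDominates (M' M : A → Option P) : Prop :=
  (∀ a, M' a = M a ∨ I.StrictlyBetter a (M' a) (M a)) ∧
    ∃ a, I.StrictlyBetter a (M' a) (M a)

end MatchInst

/-!
Among all cutoffs whose induced matching is feasible (for `f` and the capacities) take `d` with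
the least total; the cutoffs `|A| + 1` induce the empty matching, so such `d` exist, and they are
minimal cutoffs. An induced matching is always fair. Since the scores at a project are distinct,
lowering `d p` by one either changes nothing or moves exactly the applicant of score `d p - 1` to
`p`. By minimality that move is infeasible, and when some applicant envies `p` the mover is
either she or an applicant ranked above her at `p`: this is cutoff non-wastefulness.
-/

namespace List

theorem idxOf_lt_idxOf_of_find?_eq_some {α : Type*} [BEq α] [LawfulBEq α] {p : α → Bool}
    {l : List α} {x y : α} (hx : l.find? p = some x) (hy : y ∈ l) (hpy : p y) (hne : y ≠ x) :
    l.idxOf x < l.idxOf y := by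
  induction l with
  | nil => simp at hy
  | cons b l ih =>
    by_cases hb : p b
    · rw [find?_cons_of_pos hb] at hx
      cases hx
      rw [idxOf_cons_self, idxOf_cons_ne _ (Ne.symm hne)]
      exact Nat.succ_pos _
    · rw [find?_cons_of_neg hb] at hx
      have hyb : b ≠ y := fun h => hb (h ▸ hpy)
      have hxb : b ≠ x := fun h => hb (h ▸ find?_some hx)
      rw [idxOf_cons_ne _ hxb, idxOf_cons_ne _ hyb]
      exact Nat.succ_lt_succ (ih hx ((mem_cons.1 hy).resolve_left (Ne.symm hyb)))

end List

section

omit [Fintype P]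

omit [DecidableEq A] in
theorem mcount_none : mcount (fun _ : A => (none : Option P)) = fun _ => 0 := by
  funext p
  simp [mcount]

theorem mcount_swap_le_succ (M : A → Option P) (a : A) (p q : P) :
    mcount (swap M a p) q ≤ mcount M q + 1 := by
  refine (card_le_card fun b hb => ?_).trans (card_insert_le a _)
  simp only [mem_filter, mem_univ, true_and, mem_insert] at hb ⊢
  rcases eq_or_ne b a with rfl | hba
  · exact Or.inl rfl
  · rw [swap, Function.update_of_ne hba] at hb
    exact Or.inr hb

theorem mcount_swap_le_of_ne (M : A → Option P) (a : A) {p q : P} (hqp : q ≠ p) :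
    mcount (swap M a p) q ≤ mcount M q := by
  refine card_le_card fun b hb => ?_
  simp only [mem_filter, mem_univ, true_and] at hb ⊢
  rcases eq_or_ne b a with rfl | hba
  · simp [swap] at hb
    exact absurd hb.symm hqp
  · rwa [swap, Function.update_of_ne hba] at hb

namespace MatchInst

variable (I : MatchInst A P) {d : P → ℕ} {M M' : A → Option P} {a b : A} {p q : P}

section

omit [DecidableEq P]

omit [Fintype A] in
theorem rkP_lt_of_not_accP (hb : I.accP p b) (ha : ¬ I.accP p a) : I.rkP p b < I.rkP p a := by
  rw [rkP, rkP, List.idxOf_eq_length_iff.2 ha]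
  exact List.idxOf_lt_length_iff.2 hb

theorem rkP_lt_of_score_lt (hb : I.accP p b) (h : I.score p a < I.score p b) :
    I.rkP p b < I.rkP p a := by
  by_cases ha : I.accP p a
  · have ha' : a ∈ I.prefP p := ha
    have hb' : b ∈ I.prefP p := hb
    rw [score, if_pos ha', score, if_pos hb'] at h
    rw [rkP, rkP]
    omega
  · exact I.rkP_lt_of_not_accP hb ha

theorem score_injOn (hP : (I.prefP p).Nodup) : Set.InjOn (I.score p) {a | I.accP p a} := by
  intro a ha b hb h
  have ha' : a ∈ I.prefP p := ha
  have hb' : b ∈ I.prefP p := hb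
  have hlen := hP.length_le_card
  have hia := List.idxOf_lt_length_iff.2 ha'
  have hib := List.idxOf_lt_length_iff.2 hb'
  rw [score, if_pos ha', score, if_pos hb'] at h
  exact (List.idxOf_inj ha').1 (by omega)

theorem score_le_card (p : P) (a : A) : I.score p a ≤ Fintype.card A := by
  unfold score
  split <;> omega

variable {I} in
theorem Adm.anti {d' : P → ℕ} (hd : d' ≤ d) (h : I.Adm d a q) : I.Adm d' a q :=
  ⟨h.1, h.2.1, (hd q).trans h.2.2⟩

def inducedMatching (d : P → ℕ) : A → Option P := fun a =>
  (I.prefA a).find? fun q => a ∈ I.prefP q ∧ d q ≤ I.score q a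

theorem inducedMatching_card_succ :
    I.inducedMatching (fun _ => Fintype.card A + 1) = fun _ => none :=
  funext fun a => List.find?_eq_none.2 fun q _ h => by
    have := I.score_le_card q a
    simp at h
    omega

end

theorem induces_inducedMatching (d : P → ℕ) : I.Induces d (I.inducedMatching d) := by
  intro a
  constructor
  · intro p hp
    have hpred : a ∈ I.prefP p ∧ d p ≤ I.score p a := by simpa using List.find?_some hp
    refine ⟨⟨List.mem_of_find?_eq_some hp, hpred⟩, fun q hq hqp => ?_⟩
    exact List.idxOf_lt_idxOf_of_find?_eq_some hp hq.1 (by simpa [accP] using hq.2) hqp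
  · intro h q hq
    exact List.find?_eq_none.1 h q hq.1 (by simpa [accP] using hq.2)

variable {I}

theorem decCut_le (d : P → ℕ) (p : P) : decCut d p ≤ d := by
  intro q
  rcases eq_or_ne q p with rfl | hqp
  · simp [decCut]
  · simp [decCut, hqp]

theorem adm_decCut (h : I.Adm (decCut d p) a q) :
    I.Adm d a q ∨ q = p ∧ I.accP p a ∧ I.score p a + 1 = d p := by
  obtain ⟨hA, hP, hd⟩ := h
  rcases eq_or_ne q p with rfl | hqp
  · rw [decCut, Function.update_self] at hd
    by_cases hq : d q ≤ I.score q a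
    · exact Or.inl ⟨hA, hP, hq⟩
    · exact Or.inr ⟨rfl, hP, by omega⟩
  · rw [decCut, Function.update_of_ne hqp] at hd
    exact Or.inl ⟨hA, hP, hd⟩

theorem Induces.eq_some (hM : I.Induces d M) (hq : I.Adm d a q)
    (hbest : ∀ r, I.Adm d a r → r ≠ q → I.rkA a q < I.rkA a r) : M a = some q := by
  cases hMa : M a with
  | none => exact absurd hq ((hM a).2 hMa q)
  | some r =>
    by_contra hrq
    have hne : r ≠ q := fun h => hrq (h ▸ rfl)
    obtain ⟨hr, hrbest⟩ := (hM a).1 r hMa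
    exact lt_asymm (hrbest q hq (Ne.symm hne)) (hbest r hr hne)

theorem Induces.unique (hM : I.Induces d M) (hM' : I.Induces d M') : M = M' := by
  funext a
  cases hMa : M a with
  | none =>
    cases hM'a : M' a with
    | none => rfl
    | some q => exact absurd ((hM' a).1 q hM'a).1 ((hM a).2 hMa q)
  | some q =>
    obtain ⟨hq, hbest⟩ := (hM a).1 q hMa
    exact (hM'.eq_some hq hbest).symm

theorem Induces.not_adm_of_prefers (hM : I.Induces d M) (hne : M a ≠ some q)
    (hpref : I.Prefers a q (M a)) : ¬ I.Adm d a q := by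
  intro hq
  cases hMa : M a with
  | none => exact (hM a).2 hMa q hq
  | some r =>
    have hqr : q ≠ r := fun h => hne (h ▸ hMa)
    exact lt_asymm (((hM a).1 r hMa).2 q hq hqr) (hpref.2 r hMa)

theorem Induces.score_lt_of_prefers (hM : I.Induces d M) (hne : M a ≠ some q)
    (hacc : I.accP q a) (hpref : I.Prefers a q (M a)) : I.score q a < d q :=
  lt_of_not_ge fun h => hM.not_adm_of_prefers hne hpref ⟨hpref.1, hacc, h⟩

theorem Induces.isMatching (hM : I.Induces d M) (hcap : ∀ p, mcount M p ≤ I.cap p) :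
    I.IsMatching M :=
  ⟨fun a p h => ⟨((hM a).1 p h).1.1, ((hM a).1 p h).1.2.1⟩, hcap⟩

theorem Induces.fair (hM : I.Induces d M) : I.Fair M := by
  intro a q hne hpref a' ha'
  have hadm := ((hM a').1 q ha').1
  by_cases hacc : I.accP q a
  · exact I.rkP_lt_of_score_lt hadm.2.1
      ((hM.score_lt_of_prefers hne hacc hpref).trans_le hadm.2.2)
  · exact I.rkP_lt_of_not_accP hadm.2.1 hacc

theorem Induces.decCut_apply (hM : I.Induces d M) (hM' : I.Induces (decCut d p) M') (a : A) :
    M' a = M a ∨ I.score p a + 1 = d p ∧ I.accP p a ∧ M a ≠ some p ∧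
      I.Prefers a p (M a) ∧ M' a = some p := by
  cases hM'a : M' a with
  | none =>
    left
    cases hMa : M a with
    | none => rfl
    | some r => exact absurd (((hM a).1 r hMa).1.anti (decCut_le d p)) ((hM' a).2 hM'a r)
  | some q =>
    obtain ⟨hq, hbest⟩ := (hM' a).1 q hM'a
    rcases adm_decCut hq with hqd | ⟨rfl, hacc, hscore⟩
    · exact Or.inl (hM.eq_some hqd fun r hr => hbest r (hr.anti (decCut_le d p))).symm
    · have hne : M a ≠ some q := fun h => by
        have := ((hM a).1 q h).1.2.2
        omega
      refine Or.inr ⟨hscore, hacc, hne, ⟨hq.1, fun r hr => ?_⟩, rfl⟩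
      exact hbest r (((hM a).1 r hr).1.anti (decCut_le d q)) fun h => hne (h ▸ hr)

theorem Induces.decCut_eq_or_eq_swap (hP : (I.prefP p).Nodup) (hM : I.Induces d M)
    (hM' : I.Induces (decCut d p) M') :
    M' = M ∨ ∃ a, I.score p a + 1 = d p ∧ I.accP p a ∧ M a ≠ some p ∧
      I.Prefers a p (M a) ∧ M' = swap M a p := by
  by_cases hall : ∀ a, M' a = M a
  · exact Or.inl (funext hall)
  obtain ⟨a, ha⟩ := not_forall.1 hall
  obtain ⟨hs, hacc, hne, hpref, hMa⟩ := (hM.decCut_apply hM' a).resolve_left ha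
  refine Or.inr ⟨a, hs, hacc, hne, hpref, funext fun b => ?_⟩
  rcases eq_or_ne b a with rfl | hba
  · simp [swap, hMa]
  · rw [swap, Function.update_of_ne hba]
    exact (hM.decCut_apply hM' b).resolve_right fun ⟨hs', hacc', _⟩ =>
      hba (I.score_injOn hP hacc' hacc (by omega))

theorem swap_le_cap (hcap : ∀ r, mcount M r ≤ I.cap r) (hp : mcount M p < I.cap p) (r : P) :
    mcount (swap M a p) r ≤ I.cap r := by
  rcases eq_or_ne r p with rfl | hrp
  · exact (mcount_swap_le_succ M a r r).trans hp
  · exact (mcount_swap_le_of_ne M a hrp).trans (hcap r)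

theorem Induces.cutoffNonWasteful {f : (P → ℕ) → Prop} (hP : ∀ p, (I.prefP p).Nodup)
    (hM : I.Induces d M) (hf : f (mcount M)) (hcap : ∀ p, mcount M p ≤ I.cap p)
    (hmin : I.MinimalCutoffs (fun v => f v ∧ ∀ p, v p ≤ I.cap p) d) :
    I.CutoffNonWasteful f M := by
  refine ⟨hf, fun a q hne hacc hpref => ?_⟩
  have hlt := hM.score_lt_of_prefers hne hacc hpref
  have hM' := I.induces_inducedMatching (decCut d q)
  have hinfeas := (hmin q).resolve_left (by omega) _ hM'
  rcases hM.decCut_eq_or_eq_swap (hP q) hM' with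
    heq | ⟨a₀, hs₀, hacc₀, hne₀, hpref₀, heq⟩
  · exact absurd ⟨hf, hcap⟩ (heq ▸ hinfeas)
  rw [heq] at hinfeas
  by_cases hfull : I.cap q ≤ mcount M q
  · exact Or.inr (Or.inr hfull)
  have hswap : ¬ f (mcount (swap M a₀ q)) := fun h =>
    hinfeas ⟨h, swap_le_cap hcap (not_le.1 hfull)⟩
  rcases eq_or_ne a₀ a with rfl | ha₀
  · exact Or.inl hswap
  have hscore : I.score q a < I.score q a₀ :=
    lt_of_le_of_ne (by omega) fun h => ha₀ (I.score_injOn (hP q) hacc hacc₀ h).symm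
  exact Or.inr <| Or.inl
    ⟨a₀, hne₀, hacc₀, I.rkP_lt_of_score_lt hacc₀ hscore, hpref₀, hswap⟩

end MatchInst

end

namespace MatchInst

variable {d : P → ℕ} {p : P}

theorem sum_decCut_lt (hp : d p ≠ 0) : ∑ q, decCut d p q < ∑ q, d q :=
  sum_lt_sum (fun q _ => decCut_le d p q) ⟨p, mem_univ p, by simp [decCut]; omega⟩

theorem exists_minimalCutoffs (I : MatchInst A P) {g : (P → ℕ) → Prop} (h0 : g fun _ => 0) :
    ∃ d, g (mcount (I.inducedMatching d)) ∧ I.MinimalCutoffs g d := by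
  obtain ⟨d, hd, hmin⟩ := (measure fun d : P → ℕ => ∑ p, d p).wf.has_min
    {d | g (mcount (I.inducedMatching d))}
    ⟨fun _ => Fintype.card A + 1, by
      rwa [Set.mem_ofPred_eq, I.inducedMatching_card_succ, mcount_none]⟩
  refine ⟨d, hd, fun p => (eq_or_ne (d p) 0).imp_right fun hp M' hM' hg => ?_⟩
  rw [← (I.induces_inducedMatching _).unique hM'] at hg
  exact hmin _ hg (sum_decCut_lt hp)

end MatchInst

theorem cutoffStable_exists_general (I : MatchInst A P) (f : (P → ℕ) → Prop)
    (hP : ∀ p, (I.prefP p).Nodup)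
    (hf : Heredity f) :
    ∃ M : A → Option P, I.CutoffStable f M := by
  obtain ⟨d, ⟨hfeas, hcap⟩, hmin⟩ :=
    I.exists_minimalCutoffs (g := fun v => f v ∧ ∀ p, v p ≤ I.cap p)
      ⟨hf.1, fun _ => Nat.zero_le _⟩
  have hM := I.induces_inducedMatching d
  exact ⟨_, hM.isMatching hcap, hM.fair, hM.cutoffNonWasteful hP hfeas hcap hmin⟩

/-- For any matching model under distributional constraints satisfying
heredity, a cutoff stable matching always exists. -/
theorem cutoffStable_exists (I : MatchInst A P) (f : (P → ℕ) → Prop)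
    (hA : ∀ a, (I.prefA a).Nodup) (hP : ∀ p, (I.prefP p).Nodup)
    (hf : Heredity f) :
    ∃ M : A → Option P, I.CutoffStable f M :=
  cutoffStable_exists_general I f hP hf
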